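/- arXiv:2512.07592 — 2 statements merged into one kernel-verified Lean document; each statement's English description precedes it below -/
import Mathlib

section
/- Let G=(V,E) be a finite tree (a finite connected graph with no cycles). Then for every w ∈ V and every nonempty W ⊆ N(w), the star inequality x(W) + (|W| − 1)·x_w ≤ |W| defines a facet of the co-2-plex polytope P(G). -/
/-! The star inequality is valid in every graph, since a co-2-plex containing `w` contains at
most one neighbour of `w`. For the facet, take the `|V|` tight co-2-plexes `W`, `{w, b}` for
`b ∈ W`, and `W ∪ {v}` for the remaining `v`. In a forest these are co-2-plexes: there are no
triangles, so `W` is independent, and no 4-cycles, so no `v ≠ w` has two neighbours in `W`.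
Read coordinatewise, an affine dependence among their incidence vectors first loses the
coefficients of the vertices outside `W ∪ {w}`, then (comparing coordinate `w` with the total
weight) the coefficient of `w`, and finally those of `W`. -/

open Finset
open scoped Classical

noncomputable section

variable {V : Type*} [Fintype V]

def IsCo2Plex {α : Type*} (G : SimpleGraph α) (S : Finset α) : Prop :=
  ∀ u ∈ S, (S.filter fun v => G.Adj u v).card ≤ 1

def chiV {α : Type*} (S : Finset α) : α → ℝ := fun v => if v ∈ S then 1 else 0

def chiE {α : Type*} (G : SimpleGraph α) (S : Finset α) : G.edgeSet → ℝ :=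
  fun e => if ∀ v ∈ (e : Sym2 α), v ∈ S then 1 else 0

def co2PlexPolytope (G : SimpleGraph V) : Set (V → ℝ) :=
  convexHull ℝ {x | ∃ S : Finset V, IsCo2Plex G S ∧ x = chiV S}

def co2PlexPolytopeExt (G : SimpleGraph V) : Set ((V → ℝ) × (G.edgeSet → ℝ)) :=
  convexHull ℝ {p | ∃ S : Finset V, IsCo2Plex G S ∧ p = (chiV S, chiE G S)}

/-- δ(v) -/
def inc (G : SimpleGraph V) (v : V) : Finset G.edgeSet :=
  univ.filter fun e => v ∈ (e : Sym2 V)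

/-- E(W) -/
def edgesIn (G : SimpleGraph V) (W : Finset V) : Finset G.edgeSet :=
  univ.filter fun e => ∀ v ∈ (e : Sym2 V), v ∈ W

/-- E(V \ W) -/
def edgesOut (G : SimpleGraph V) (W : Finset V) : Finset G.edgeSet :=
  univ.filter fun e => ∀ v ∈ (e : Sym2 V), v ∉ W

/-- δ(W) -/
def edgesCut (G : SimpleGraph V) (W : Finset V) : Finset G.edgeSet :=
  univ.filter fun e => (∃ v ∈ (e : Sym2 V), v ∈ W) ∧ ∃ v ∈ (e : Sym2 V), v ∉ W

def utter (G : SimpleGraph V) : SimpleGraph (V ⊕ G.edgeSet) where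
  Adj a b :=
    match a, b with
    | Sum.inl u, Sum.inl v => G.Adj u v
    | Sum.inl w, Sum.inr e => w ∈ (e : Sym2 V) ∨ ∃ z ∈ (e : Sym2 V), G.Adj w z
    | Sum.inr e, Sum.inl w => w ∈ (e : Sym2 V) ∨ ∃ z ∈ (e : Sym2 V), G.Adj w z
    | Sum.inr e, Sum.inr f =>
        e ≠ f ∧ ((∃ v, v ∈ (e : Sym2 V) ∧ v ∈ (f : Sym2 V)) ∨
          ∃ a ∈ (e : Sym2 V), ∃ b ∈ (f : Sym2 V), G.Adj a b)
  symm := by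
    constructor
    rintro (u | e) (v | f) h
    · exact h.symm
    · exact h
    · exact h
    · obtain ⟨hne, h⟩ := h
      refine ⟨hne.symm, ?_⟩
      rcases h with ⟨v, hv1, hv2⟩ | ⟨a, ha, b, hb, hab⟩
      · exact Or.inl ⟨v, hv2, hv1⟩
      · exact Or.inr ⟨b, hb, a, ha, hab.symm⟩
  loopless := by
    constructor
    rintro (u | e) h
    · exact G.loopless.irrefl u h
    · exact h.1 rfl

def IsUtterClique (G : SimpleGraph V) (W : Finset V) (F : Finset G.edgeSet) : Prop :=
  (utter G).IsClique (Sum.inl '' (W : Set V) ∪ Sum.inr '' (F : Set G.edgeSet))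

def IsMaxUtterClique (G : SimpleGraph V) (W : Finset V) (F : Finset G.edgeSet) : Prop :=
  IsUtterClique G W F ∧
    (∀ v ∉ W, ¬ IsUtterClique G (insert v W) F) ∧
    (∀ e ∉ F, ¬ IsUtterClique G W (insert e F))

/-- The contraction G/F. -/
def contract {α : Type*} (G : SimpleGraph α) (F : Set (Sym2 α)) :
    SimpleGraph (SimpleGraph.fromEdgeSet F).ConnectedComponent where
  Adj c d := c ≠ d ∧ ∃ u v, G.Adj u v ∧
      (SimpleGraph.fromEdgeSet F).connectedComponentMk u = c ∧
      (SimpleGraph.fromEdgeSet F).connectedComponentMk v = d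
  symm := by
    constructor
    rintro c d ⟨hne, u, v, h, hu, hv⟩
    exact ⟨hne.symm, v, u, h.symm, hv, hu⟩
  loopless := by
    constructor
    rintro c ⟨hne, _⟩
    exact hne rfl

def IsPerfect {α : Type*} (G : SimpleGraph α) : Prop :=
  ∀ s : Set α, (G.induce s).chromaticNumber = ((G.induce s).cliqueNum : ℕ∞)

def ContractionPerfect (G : SimpleGraph V) : Prop :=
  ∀ F : Set (Sym2 V), F ⊆ G.edgeSet → IsPerfect (contract G F)

/-- Chordal: no induced cycle of length at least 4. -/
def Chordal (G : SimpleGraph V) : Prop :=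
  ∀ n, 4 ≤ n → IsEmpty (SimpleGraph.cycleGraph n ↪g G)

def IsMaxCliqueF (G : SimpleGraph V) (K : Finset V) : Prop :=
  G.IsClique (K : Set V) ∧ ∀ K' : Finset V, G.IsClique (K' : Set V) → K ⊆ K' → K = K'

def Is2Plex (G : SimpleGraph V) (K : Finset V) : Prop :=
  ∀ v ∈ K, K.card - 2 ≤ (K.filter fun u => G.Adj v u).card

/-- α₂(G[W]) -/
def co2plexNumOn (G : SimpleGraph V) (W : Finset V) : ℕ :=
  Finset.univ.sup fun S : Finset V => if S ⊆ W ∧ IsCo2Plex G S then S.card else 0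

/-- Facet-defining inequality of a full-dimensional polytope in ℝ^α: a valid
inequality whose tight points contain `card α` affinely independent points. -/
def IsFacet {α : Type*} [Fintype α] (P : Set (α → ℝ)) (a : α → ℝ) (c : ℝ) : Prop :=
  (∀ x ∈ P, ∑ v, a v * x v ≤ c) ∧
  ∃ f : Fin (Fintype.card α) → (α → ℝ),
    AffineIndependent ℝ f ∧ ∀ i, f i ∈ P ∧ ∑ v, a v * f i v = c

/-- The polytope T(G). -/
def TPoly (G : SimpleGraph V) [DecidableRel G.Adj] : Set (V → ℝ) :=
  {x | (∀ v, 0 ≤ x v ∧ x v ≤ 1) ∧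
    ∀ (w : V), ∀ W ⊆ G.neighborFinset w,
      ∑ v ∈ W, x v + ((W.card : ℝ) - 1) * x w ≤ (W.card : ℝ)}

/-- Total dual integrality of the system `A x ≤ b`. -/
def IsTDI {ι κ : Type*} [Fintype ι] [Fintype κ] (A : ι → κ → ℝ) (b : ι → ℝ) : Prop :=
  ∀ c : κ → ℤ, ∀ m : ℝ,
    IsGreatest {t | ∃ x : κ → ℝ, (∀ i, ∑ j, A i j * x j ≤ b i) ∧ t = ∑ j, (c j : ℝ) * x j} m →
    ∃ π : ι → ℤ, (∀ i, 0 ≤ π i) ∧ (∀ j, ∑ i, (π i : ℝ) * A i j = (c j : ℝ)) ∧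
      ∑ i, (π i : ℝ) * b i = m

theorem sum_mul_chiV {α : Type*} [Fintype α] (a : α → ℝ) (S : Finset α) :
    ∑ v, a v * chiV S v = ∑ v ∈ S, a v := by
  simp [chiV]

theorem sum_mul_le_of_mem_convexHull {α : Type*} [Fintype α] {s : Set (α → ℝ)} {a : α → ℝ}
    {c : ℝ} (h : ∀ x ∈ s, ∑ v, a v * x v ≤ c) {x : α → ℝ} (hx : x ∈ convexHull ℝ s) :
    ∑ v, a v * x v ≤ c := by
  refine convexHull_min h (convex_halfSpace_le ⟨fun y z => ?_, fun r y => ?_⟩ c) hx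
  · simp only [Pi.add_apply, mul_add, sum_add_distrib]
  · simp only [Pi.smul_apply, smul_eq_mul, mul_sum, mul_left_comm]

theorem sum_smul_chiV_apply {α ι : Type*} [Fintype ι] (g : ι → ℝ) (S : ι → Finset α) (u : α) :
    (∑ i, g i • chiV (S i)) u = ∑ i with u ∈ S i, g i := by
  simp [Finset.sum_apply, chiV, sum_filter]

namespace SimpleGraph

variable {α : Type*} {G : SimpleGraph α}

theorem IsAcyclic.not_adj_of_adj_of_adj (hG : G.IsAcyclic) {w a b : α} (ha : G.Adj w a)
    (hb : G.Adj w b) : ¬ G.Adj a b := fun hab =>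
  hG.cliqueFree le_rfl {w, a, b} (is3Clique_triple_iff.mpr ⟨ha, hb, hab⟩)

theorem IsAcyclic.eq_of_adj_of_adj (hG : G.IsAcyclic) {u v a b : α} (huv : u ≠ v)
    (hua : G.Adj u a) (hav : G.Adj a v) (hub : G.Adj u b) (hbv : G.Adj b v) : a = b := by
  have hpa : (Walk.cons hua (Walk.cons hav Walk.nil)).IsPath := by
    simp [Walk.isPath_def, hua.ne, hav.ne, huv]
  have hpb : (Walk.cons hub (Walk.cons hbv Walk.nil)).IsPath := by
    simp [Walk.isPath_def, hub.ne, hbv.ne, huv]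
  simpa using congrArg (fun p : G.Path u v => p.1.support)
    ((hG.subsingleton_path u v).elim ⟨_, hpa⟩ ⟨_, hpb⟩)

end SimpleGraph

section Co2Plex

variable {α : Type*} {G : SimpleGraph α}

theorem isCo2Plex_of_isIndepSet {S : Finset α} (hS : G.IsIndepSet (S : Set α)) :
    IsCo2Plex G S := by
  intro u hu
  rw [filter_eq_empty_iff.mpr fun v hv hadj => hS hu hv hadj.ne hadj, card_empty]
  exact zero_le_one

theorem isCo2Plex_insert {S : Finset α} {v : α} (hS : G.IsIndepSet (S : Set α))
    (hv : (S.filter (G.Adj v)).card ≤ 1) : IsCo2Plex G (insert v S) := by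
  intro u hu
  rw [filter_insert]
  rcases mem_insert.mp hu with rfl | hu
  · simpa using hv
  · rw [filter_eq_empty_iff.mpr fun x hx hadj => hS hu hx hadj.ne hadj]
    split_ifs <;> simp

def starCoeff (w : α) (W : Finset α) : α → ℝ :=
  fun v => if v ∈ W then 1 else if v = w then (W.card : ℝ) - 1 else 0

theorem sum_starCoeff {w : α} {W : Finset α} (hwW : w ∉ W) (S : Finset α) :
    ∑ u ∈ S, starCoeff w W u = (S ∩ W).card + if w ∈ S then (W.card : ℝ) - 1 else 0 := by
  simp only [starCoeff]
  rw [sum_ite, sum_const, filter_mem_eq_inter, nsmul_one, sum_ite_eq']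
  simp [hwW]

theorem sum_starCoeff_le_of_isCo2Plex {w : α} {W S : Finset α} (hW : ∀ v ∈ W, G.Adj w v)
    (hS : IsCo2Plex G S) : ∑ u ∈ S, starCoeff w W u ≤ W.card := by
  have hwW : w ∉ W := fun h => (hW w h).ne rfl
  rw [sum_starCoeff hwW]
  split_ifs with hwS
  · have : (S ∩ W).card ≤ 1 :=
      (card_le_card fun v hv => mem_filter.mpr
        ⟨(mem_inter.mp hv).1, hW v (mem_inter.mp hv).2⟩).trans (hS w hwS)
    have : ((S ∩ W).card : ℝ) ≤ 1 := by exact_mod_cast this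
    linarith
  · simpa using card_le_card inter_subset_right

end Co2Plex

section StarTightSet

variable {α : Type*} {G : SimpleGraph α} {w : α} {W : Finset α}

def starTightSet (w : α) (W : Finset α) (v : α) : Finset α :=
  if v = w then W else if v ∈ W then {w, v} else insert v W

theorem isCo2Plex_starTightSet (hG : G.IsAcyclic) (hW : ∀ v ∈ W, G.Adj w v) (v : α) :
    IsCo2Plex G (starTightSet w W v) := by
  have hindep : G.IsIndepSet (W : Set α) := fun a ha b hb _ =>
    hG.not_adj_of_adj_of_adj (hW a ha) (hW b hb)
  unfold starTightSet
  split_ifs with hvw hvW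
  · exact isCo2Plex_of_isIndepSet hindep
  · exact isCo2Plex_insert (by simp) ((card_filter_le _ _).trans (card_singleton v).le)
  · refine isCo2Plex_insert hindep (card_le_one.mpr fun a ha b hb => ?_)
    rw [mem_filter] at ha hb
    exact hG.eq_of_adj_of_adj hvw ha.2 (hW a ha.1).symm hb.2 (hW b hb.1).symm

theorem sum_starCoeff_starTightSet (hwW : w ∉ W) (v : α) :
    ∑ u ∈ starTightSet w W v, starCoeff w W u = W.card := by
  unfold starTightSet
  split_ifs with hvw hvW <;> rw [sum_starCoeff hwW]
  · simp [hwW]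
  · rw [insert_inter_of_notMem hwW, singleton_inter_of_mem hvW]
    simp
  · simp [hwW, Ne.symm hvw, hvW]

theorem filter_mem_starTightSet_of_ne [Fintype α] {c : α} (hcW : c ∉ W) (hcw : c ≠ w) :
    ({v | c ∈ starTightSet w W v} : Finset α) = {c} := by
  ext v
  by_cases hvw : v = w <;> by_cases hvW : v ∈ W <;> simp_all [starTightSet] <;> grind

theorem filter_mem_starTightSet_center [Fintype α] (hwW : w ∉ W) :
    ({v | w ∈ starTightSet w W v} : Finset α) = W := by
  ext v
  by_cases hvw : v = w <;> by_cases hvW : v ∈ W <;> simp_all [starTightSet] <;> grind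

theorem filter_mem_starTightSet_of_mem [Fintype α] {b : α} (hbW : b ∈ W) (hwW : w ∉ W) :
    ({v | b ∈ starTightSet w W v} : Finset α) = insert b Wᶜ := by
  ext v
  by_cases hvw : v = w <;> by_cases hvW : v ∈ W <;> simp_all [starTightSet] <;> grind

theorem affineIndependent_chiV_starTightSet [Fintype α] (hwW : w ∉ W) :
    AffineIndependent ℝ fun v => chiV (starTightSet w W v) := by
  refine (affineIndependent_iff_of_fintype ℝ _).mpr fun g hsum hcomb => ?_
  rw [weightedVSub_eq_linear_combination _ hsum] at hcomb
  have hcoord (u : α) : ∑ v with u ∈ starTightSet w W v, g v = 0 := by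
    rw [← sum_smul_chiV_apply, hcomb, Pi.zero_apply]
  have hout (c : α) (hcW : c ∉ W) (hcw : c ≠ w) : g c = 0 := by
    simpa [filter_mem_starTightSet_of_ne hcW hcw] using hcoord c
  have hcompl : ∑ v ∈ Wᶜ, g v = g w :=
    sum_eq_single_of_mem w (mem_compl.mpr hwW) fun c hc hcw => hout c (mem_compl.mp hc) hcw
  have hW : ∑ v ∈ W, g v = 0 := by
    simpa [filter_mem_starTightSet_center hwW] using hcoord w
  have hgw : g w = 0 := by
    rw [← hcompl]
    linarith [sum_add_sum_compl W g]
  have hin (b : α) (hbW : b ∈ W) : g b = 0 := by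
    have := hcoord b
    rwa [filter_mem_starTightSet_of_mem hbW hwW, sum_insert (notMem_compl.mpr hbW), hcompl, hgw,
      add_zero] at this
  intro v
  by_cases hvW : v ∈ W
  · exact hin v hvW
  by_cases hvw : v = w
  · exact hvw ▸ hgw
  exact hout v hvW hvw

end StarTightSet

theorem stmt8_general (G : SimpleGraph V) [DecidableRel G.Adj] (htree : G.IsTree)
    (w : V) (W : Finset V) (hW : W ⊆ G.neighborFinset w) :
    IsFacet (co2PlexPolytope G)
      (fun v => if v ∈ W then 1 else if v = w then (W.card : ℝ) - 1 else 0)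
      (W.card : ℝ) := by
  have hadj : ∀ v ∈ W, G.Adj w v := fun v hv => (G.mem_neighborFinset w v).mp (hW hv)
  have hwW : w ∉ W := fun h => (hadj w h).ne rfl
  let e := (Fintype.equivFin V).symm
  refine ⟨fun x hx => sum_mul_le_of_mem_convexHull ?_ hx,
    fun i => chiV (starTightSet w W (e i)),
    (affineIndependent_chiV_starTightSet hwW).comp_embedding e.toEmbedding, fun i => ⟨?_, ?_⟩⟩
  · rintro _ ⟨S, hS, rfl⟩
    rw [sum_mul_chiV]
    exact sum_starCoeff_le_of_isCo2Plex hadj hS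
  · exact subset_convexHull ℝ _ ⟨_, isCo2Plex_starTightSet htree.isAcyclic hadj _, rfl⟩
  · rw [sum_mul_chiV]
    exact sum_starCoeff_starTightSet hwW _

/-- In a tree, every star inequality (with W nonempty) defines
a facet of the co-2-plex polytope. -/
theorem stmt8 (G : SimpleGraph V) [DecidableRel G.Adj] (htree : G.IsTree)
    (w : V) (W : Finset V) (hW : W ⊆ G.neighborFinset w) (hne : W.Nonempty) :
    IsFacet (co2PlexPolytope G)
      (fun v => if v ∈ W then 1 else if v = w then (W.card : ℝ) - 1 else 0)
      (W.card : ℝ) :=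
  stmt8_general G htree w W hW

end
end

section
/- Let G=(V,E) be a finite simple connected graph such that the co-2-plex polytope P(G) equals T(G). Then G contains no 2-plex of cardinality 4, and G contains no induced cycle of length ℓ ≥ 4 with ℓ not divisible by 3. -/
open Finset
open scoped Classical

noncomputable section

variable {V : Type*} [Fintype V]

/-!
If `P(G) = T(G)`, every inequality valid for all co-2-plexes holds on `T(G)`. A co-2-plex meets
a 2-plex in at most two vertices, and an induced cycle of length `ℓ` in at most `⌊2ℓ/3⌋`
vertices (no three consecutive ones). But `(3/5)·χ^K` for a 2-plex `K` with `|K| = 4`, and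
`(2/3)·χ^C` for an induced cycle `C`, satisfy all star inequalities of `T(G)`, and their sums
`12/5 > 2` and `2ℓ/3 > ⌊2ℓ/3⌋` (when `3 ∤ ℓ`) violate those bounds.
-/

lemma sum_chiV {α : Type*} (S W : Finset α) : ∑ v ∈ W, chiV S v = #(W ∩ S) := by
  simp [chiV, sum_ite_mem]

lemma sum_le_of_mem_co2PlexPolytope {α : Type*} {G : SimpleGraph α} {A : Finset α} {c : ℝ}
    (hA : ∀ S, IsCo2Plex G S → (#(S ∩ A) : ℝ) ≤ c) {x : α → ℝ}
    (hx : x ∈ co2PlexPolytope G) : ∑ v ∈ A, x v ≤ c := by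
  let φ : (α → ℝ) →ₗ[ℝ] ℝ :=
    { toFun := fun y => ∑ v ∈ A, y v
      map_add' := fun _ _ => sum_add_distrib
      map_smul' := fun _ _ => by simp [mul_sum] }
  refine convexHull_min ?_ (convex_halfSpace_le φ.isLinear c) hx
  rintro _ ⟨S, hS, rfl⟩
  simpa [φ, sum_chiV, inter_comm] using hA S hS

lemma smul_chiV_mem_TPoly {G : SimpleGraph V} [DecidableRel G.Adj] {A : Finset V} {t : ℝ}
    {d : ℕ} (ht0 : 0 ≤ t) (ht1 : t ≤ 1) (htd : t * (2 * d - 1) ≤ d)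
    (hdeg : ∀ w ∈ A, #(G.neighborFinset w ∩ A) ≤ d) : t • chiV A ∈ TPoly G := by
  refine ⟨fun v => by by_cases hv : v ∈ A <;> simp [chiV, hv, ht0, ht1], fun w W hW => ?_⟩
  simp only [Pi.smul_apply, smul_eq_mul, ← mul_sum, sum_chiV]
  have hWA : (#(W ∩ A) : ℝ) ≤ #W := by exact_mod_cast card_le_card inter_subset_left
  by_cases hw : w ∈ A
  · have hk : (#(W ∩ A) : ℝ) ≤ d := by
      exact_mod_cast (card_le_card (inter_subset_inter_right hW)).trans (hdeg w hw)
    -- `k ↦ t * (2k - 1) - k` is linear and nonpositive at `k = 0` and at `k = d`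
    have hkey : t * (2 * #(W ∩ A) - 1) ≤ #(W ∩ A) := by
      rcases le_total t (1 / 2) with ht | ht <;> nlinarith
    simp only [chiV, hw, if_true, mul_one]
    nlinarith
  · simp only [chiV, hw, if_false, mul_zero, add_zero]
    nlinarith

lemma IsCo2Plex.eq_of_adj_of_adj {α : Type*} {G : SimpleGraph α} {S : Finset α}
    (hS : IsCo2Plex G S) {u a b : α} (hu : u ∈ S) (ha : a ∈ S) (hb : b ∈ S)
    (hua : G.Adj u a) (hub : G.Adj u b) : a = b :=
  card_le_one.mp (hS u hu) a (by simp [ha, hua]) b (by simp [hb, hub])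

lemma Is2Plex.adj_or_adj {α : Type*} {G : SimpleGraph α} {K : Finset α} (hK : Is2Plex G K)
    {u a b : α} (hu : u ∈ K) (ha : a ∈ K) (hb : b ∈ K) (hua : u ≠ a) (hub : u ≠ b)
    (hab : a ≠ b) : G.Adj u a ∨ G.Adj u b := by
  by_contra! h
  have hsub : {u, a, b} ⊆ K := by simp [insert_subset_iff, hu, ha, hb]
  have hnbr : K.filter (fun v => G.Adj u v) ⊆ K \ {u, a, b} := by
    intro v hv
    simp only [mem_filter, mem_sdiff, mem_insert, mem_singleton] at hv ⊢
    refine ⟨hv.1, ?_⟩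
    rintro (rfl | rfl | rfl)
    exacts [G.loopless.irrefl _ hv.2, h.1 hv.2, h.2 hv.2]
  have h3 : #({u, a, b} : Finset α) = 3 := card_eq_three.mpr ⟨u, a, b, hua, hub, hab, rfl⟩
  have hle := card_le_card hnbr
  rw [card_sdiff_of_subset hsub, h3] at hle
  have h3K := card_le_card hsub
  have := hK u hu
  omega

lemma IsCo2Plex.card_inter_le_two {α : Type*} {G : SimpleGraph α} {S K : Finset α}
    (hS : IsCo2Plex G S) (hK : Is2Plex G K) : #(S ∩ K) ≤ 2 := by
  by_contra! h
  obtain ⟨T, hT, hT3⟩ := exists_subset_card_eq (show 3 ≤ #(S ∩ K) from h)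
  obtain ⟨a, b, c, hab, hac, hbc, rfl⟩ := card_eq_three.mp hT3
  simp only [insert_subset_iff, singleton_subset_iff, mem_inter] at hT
  obtain ⟨⟨haS, haK⟩, ⟨hbS, hbK⟩, hcS, hcK⟩ := hT
  -- among three vertices of a 2-plex, one is adjacent to the two others
  rcases hK.adj_or_adj haK hbK hcK hab hac hbc with hab' | hac'
  · rcases hK.adj_or_adj hcK haK hbK hac.symm hbc.symm hab with hca | hcb
    · exact hbc (hS.eq_of_adj_of_adj haS hbS hcS hab' hca.symm)
    · exact hac (hS.eq_of_adj_of_adj hbS haS hcS hab'.symm hcb.symm)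
  · rcases hK.adj_or_adj hbK haK hcK hab.symm hbc hac with hba | hbc'
    · exact hbc (hS.eq_of_adj_of_adj haS hbS hcS hba.symm hac')
    · exact hab (hS.eq_of_adj_of_adj hcS haS hbS hac'.symm hbc'.symm)

lemma three_mul_card_le_of_no_translate {α : Type*} [AddGroup α] [Fintype α] (T : Finset α)
    (a b : α) (h : ∀ i ∈ T, i + a ∈ T → i + b ∉ T) : 3 * #T ≤ 2 * Fintype.card α := by
  have hshift (c : α) : ∑ i, (if i + c ∈ T then 1 else 0) = #T := by
    rw [Fintype.sum_equiv (Equiv.addRight c) (fun i => if i + c ∈ T then 1 else 0)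
      (fun i => if i ∈ T then 1 else 0) fun _ => rfl]
    simp
  calc 3 * #T = ∑ i, ((if i + 0 ∈ T then 1 else 0) + (if i + a ∈ T then 1 else 0)
        + (if i + b ∈ T then 1 else 0)) := by
        rw [sum_add_distrib, sum_add_distrib, hshift, hshift, hshift]; ring
    _ ≤ ∑ _i : α, 2 := sum_le_sum fun i _ => by
        have := h i
        split_ifs <;> simp_all
    _ = 2 * Fintype.card α := by simp [mul_comm]

lemma SimpleGraph.Embedding.neighborFinset_inter_map {W : Type*} [Fintype W] {H : SimpleGraph W}
    [DecidableRel H.Adj] {G : SimpleGraph V} [DecidableRel G.Adj] (f : H ↪g G) (v : W) :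
    G.neighborFinset (f v) ∩ univ.map f.toEmbedding = (H.neighborFinset v).map f.toEmbedding := by
  ext x
  simp only [mem_inter, SimpleGraph.mem_neighborFinset, mem_map, mem_univ, true_and]
  constructor
  · rintro ⟨hadj, w, rfl⟩
    exact ⟨w, f.map_adj_iff.mp hadj, rfl⟩
  · rintro ⟨w, hadj, rfl⟩
    exact ⟨f.map_adj_iff.mpr hadj, w, rfl⟩

lemma IsCo2Plex.three_mul_card_inter_cycle_le {α : Type*} {G : SimpleGraph α} {S : Finset α}
    (hS : IsCo2Plex G S) {n : ℕ} (f : SimpleGraph.cycleGraph (n + 3) ↪g G) :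
    3 * #(S ∩ univ.map f.toEmbedding) ≤ 2 * (n + 3) := by
  rw [inter_comm, ← filter_mem_eq_inter, filter_map, card_map]
  simpa using three_mul_card_le_of_no_translate {i | f i ∈ S} 1 2 fun i hi hi1 hi2 => by
    simp only [mem_filter, mem_univ, true_and] at hi hi1 hi2
    have hne : f i ≠ f (i + 2) := by
      simp [Fin.ext_iff, Nat.mod_eq_of_lt (show 2 < n + 3 by omega)]
    refine hne (hS.eq_of_adj_of_adj hi1 hi hi2 (f.map_adj_iff.mpr ?_) (f.map_adj_iff.mpr ?_))
    · exact (SimpleGraph.cycleGraph_adj (n := n + 1)).mpr (Or.inl (by simp))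
    · exact (SimpleGraph.cycleGraph_adj (n := n + 1)).mpr
        (Or.inr (by rw [add_sub_add_left_eq_sub, sub_eq_iff_eq_add]; rfl))

section PolytopeEq

variable {G : SimpleGraph V} [DecidableRel G.Adj]

lemma mul_card_le_of_co2PlexPolytope_eq_TPoly (h : co2PlexPolytope G = TPoly G)
    {A : Finset V} {t c : ℝ} {d : ℕ} (ht0 : 0 ≤ t) (ht1 : t ≤ 1)
    (htd : t * (2 * d - 1) ≤ d) (hdeg : ∀ w ∈ A, #(G.neighborFinset w ∩ A) ≤ d)
    (hA : ∀ S, IsCo2Plex G S → (#(S ∩ A) : ℝ) ≤ c) : t * #A ≤ c := by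
  have hx : t • chiV A ∈ co2PlexPolytope G := h ▸ smul_chiV_mem_TPoly ht0 ht1 htd hdeg
  simpa [← mul_sum, sum_chiV] using sum_le_of_mem_co2PlexPolytope hA hx

lemma Is2Plex.card_ne_four_of_co2PlexPolytope_eq_TPoly (h : co2PlexPolytope G = TPoly G)
    {K : Finset V} (hK : Is2Plex G K) : #K ≠ 4 := by
  intro hK4
  have hdeg (w) (hw : w ∈ K) : #(G.neighborFinset w ∩ K) ≤ 3 := by
    refine (card_le_card fun v hv => mem_erase.mpr ⟨?_, (mem_inter.mp hv).2⟩).trans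
      (by rw [card_erase_of_mem hw, hK4])
    rintro rfl
    exact G.loopless.irrefl _ ((G.mem_neighborFinset _ _).mp (mem_inter.mp hv).1)
  have := mul_card_le_of_co2PlexPolytope_eq_TPoly h (t := 3 / 5) (c := 2) (by norm_num)
    (by norm_num) (by norm_num) hdeg fun S hS => by exact_mod_cast hS.card_inter_le_two hK
  rw [hK4] at this
  norm_num at this

lemma isEmpty_cycleGraph_embedding_of_co2PlexPolytope_eq_TPoly
    (h : co2PlexPolytope G = TPoly G) {n : ℕ} (hn : 3 ≤ n) (h3 : ¬3 ∣ n) :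
    IsEmpty (SimpleGraph.cycleGraph n ↪g G) := by
  obtain ⟨m, rfl⟩ := Nat.exists_eq_add_of_le' hn
  refine ⟨fun f => ?_⟩
  set C := univ.map f.toEmbedding
  have hdeg : ∀ w ∈ C, #(G.neighborFinset w ∩ C) ≤ 2 := by
    intro w hw
    obtain ⟨i, -, rfl⟩ := mem_map.mp hw
    rw [RelEmbedding.coe_toEmbedding, f.neighborFinset_inter_map, card_map,
      SimpleGraph.card_neighborFinset_eq_degree, SimpleGraph.cycleGraph_degree_three_le]
  -- `3 ∤ 2n`, so a co-2-plex meets the cycle in at most `(2n - 1) / 3` vertices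
  have hA (S : Finset V) (hS : IsCo2Plex G S) : (#(S ∩ C) : ℝ) ≤ (2 * (m + 3) - 1) / 3 := by
    have : 3 * #(S ∩ C) ≤ 2 * (m + 3) := hS.three_mul_card_inter_cycle_le f
    rw [le_div_iff₀ (by norm_num)]
    exact_mod_cast (by omega : (#(S ∩ C) : ℤ) * 3 ≤ 2 * (m + 3) - 1)
  have := mul_card_le_of_co2PlexPolytope_eq_TPoly h (t := 2 / 3) (by norm_num) (by norm_num)
    (by norm_num) hdeg hA
  simp only [C, card_map, card_univ, Fintype.card_fin] at this
  push_cast at this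
  linarith

end PolytopeEq

theorem stmt14_general (G : SimpleGraph V) [DecidableRel G.Adj]
    (h : co2PlexPolytope G = TPoly G) :
    (∀ K : Finset V, Is2Plex G K → K.card ≠ 4) ∧
    (∀ n : ℕ, 4 ≤ n → ¬ (3 ∣ n) → IsEmpty (SimpleGraph.cycleGraph n ↪g G)) :=
  ⟨fun _ hK => hK.card_ne_four_of_co2PlexPolytope_eq_TPoly h, fun _ hn h3 =>
    isEmpty_cycleGraph_embedding_of_co2PlexPolytope_eq_TPoly h (by omega) h3⟩

/-- If P(G) = T(G) for a connected graph G, then G contains no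
2-plex of cardinality 4 and no induced cycle of length ℓ ≥ 4 with 3 ∤ ℓ. -/
theorem stmt14 (G : SimpleGraph V) [DecidableRel G.Adj] (hconn : G.Connected)
    (h : co2PlexPolytope G = TPoly G) :
    (∀ K : Finset V, Is2Plex G K → K.card ≠ 4) ∧
    (∀ n : ℕ, 4 ≤ n → ¬ (3 ∣ n) → IsEmpty (SimpleGraph.cycleGraph n ↪g G)) :=
  stmt14_general G h

end
end
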